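/- arXiv:1911.06120 — 2 statements merged into one kernel-verified Lean document; each statement's English description precedes it below -/
import Mathlib

section
/- If a subgroup Γ of Aff(2,ℍ) acts freely on ℍ², then Γ is conjugate in Aff(2,ℍ) to a subgroup of G₁ or to a subgroup of G₂, where G₁ is the group of all matrices [[a,b,r],[0,1,s],[0,0,1]] with a,b,r,s ∈ ℍ, a ≠ 0, and G₂ is the group of all matrices [[1,b,r],[0,d,s],[0,0,1]] with b,r,s,d ∈ ℍ, d ≠ 0. -/
open Quaternion Matrix

noncomputable section

/-- Membership in Aff(2,ℍ): a 3×3 quaternionic matrix whose last row is (0,0,1). -/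
def IsAffMat (M : Matrix (Fin 3) (Fin 3) ℍ[ℝ]) : Prop :=
  M 2 0 = 0 ∧ M 2 1 = 0 ∧ M 2 2 = 1

/-- The affine action of a 3×3 quaternionic matrix on ℍ²:
`(x,y) ↦ (ax+by+r, cx+dy+s)`. -/
def affAct (M : Matrix (Fin 3) (Fin 3) ℍ[ℝ]) (p : ℍ[ℝ] × ℍ[ℝ]) : ℍ[ℝ] × ℍ[ℝ] :=
  (M 0 0 * p.1 + M 0 1 * p.2 + M 0 2, M 1 0 * p.1 + M 1 1 * p.2 + M 1 2)

/-- A subgroup of GL(3,ℍ) (whose elements are affine) acts freely on ℍ² if no element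
other than the identity fixes a point. -/
def ActsFreely (Γ : Subgroup (Matrix (Fin 3) (Fin 3) ℍ[ℝ])ˣ) : Prop :=
  ∀ g ∈ Γ, (∃ p : ℍ[ℝ] × ℍ[ℝ], affAct g.val p = p) → g = 1
/-- Membership in G₁: matrices `[[a,b,r],[0,1,s],[0,0,1]]` with `a ≠ 0`. -/
def InG1 (M : Matrix (Fin 3) (Fin 3) ℍ[ℝ]) : Prop :=
  M 0 0 ≠ 0 ∧ M 1 0 = 0 ∧ M 1 1 = 1 ∧ IsAffMat M

/-- Membership in G₂: matrices `[[1,b,r],[0,d,s],[0,0,1]]` with `d ≠ 0`. -/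
def InG2 (M : Matrix (Fin 3) (Fin 3) ℍ[ℝ]) : Prop :=
  M 0 0 = 1 ∧ M 1 0 = 0 ∧ M 1 1 ≠ 0 ∧ IsAffMat M

/-!
If the linear part `A` of some `g ∈ Γ` had `A - 1` invertible, `g` would have a fixed point; so every
linear part has a nonzero fixed column vector and a nonzero fixed row vector. For two such `A`, `B`
whose product has the fixed row vector `w`, either `A` and `B` share a fixed vector or `w` is fixed
by both. As the fixed vectors (resp. row vectors) of a matrix `≠ 1` form a line, comparing pairs of
elements shows that all linear parts share a fixed vector `u` or a fixed row vector `w`. A linear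
change of coordinates taking the first basis vector to `u` (resp. the second coordinate functional
to `w`) then conjugates `Γ` into `G₂` (resp. `G₁`).
-/

open Module

section
variable {D V W : Type*} [DivisionRing D] [AddCommGroup V] [Module D V] [AddCommGroup W]
  [Module D W]

theorem LinearMap.exists_smul_eq_of_finrank_eq_two (hV : finrank D V = 2) {f : V →ₗ[D] W}
    (hf : f ≠ 0) {u z : V} (hu : u ≠ 0) (hfu : f u = 0) (hfz : f z = 0) : ∃ c : D, c • u = z := by
  have : FiniteDimensional D V := Module.finite_of_finrank_eq_succ hV
  have hrange : finrank D (LinearMap.range f) ≠ 0 := by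
    rwa [Ne, Submodule.finrank_eq_zero, LinearMap.range_eq_bot]
  have hu' : (⟨u, hfu⟩ : LinearMap.ker f) ≠ 0 := fun h => hu (congrArg Subtype.val h)
  have hker : finrank D (LinearMap.ker f) = 1 := by
    have := f.finrank_range_add_finrank_ker
    have : 0 < finrank D (LinearMap.ker f) := Module.finrank_pos_iff_exists_ne_zero.2 ⟨_, hu'⟩
    omega
  obtain ⟨c, hc⟩ := (finrank_eq_one_iff_of_nonzero' _ hu').1 hker ⟨z, hfz⟩
  exact ⟨c, congrArg Subtype.val hc⟩

end

section
variable {K : Type*} [DivisionRing K]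

-- Column vectors `n → K` form a right `K`-vector space, i.e. a `Kᵐᵒᵖ`-module, and `mulVec` is
-- `Kᵐᵒᵖ`-linear (`Matrix.mulVecBilin K Kᵐᵒᵖ`); row vectors and `vecMul` are the `K`-linear side.
theorem finrank_mulOpposite_self : finrank Kᵐᵒᵖ K = 1 :=
  (finrank_eq_one_iff_of_nonzero' 1 one_ne_zero).2 fun w => ⟨MulOpposite.op w, by simp⟩

instance : Module.Finite Kᵐᵒᵖ K := Module.finite_of_finrank_eq_succ finrank_mulOpposite_self

end

namespace Matrix

section
variable {K n : Type*} [DivisionRing K] [Fintype n] [DecidableEq n]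

theorem isUnit_of_vecMul_injective {A : Matrix n n K} (h : Function.Injective A.vecMul) :
    IsUnit A := by
  obtain ⟨B, hBA⟩ := vecMul_surjective_iff_exists_left_inverse.1
    (LinearMap.injective_iff_surjective (f := A.vecMulLinear).1 h)
  exact ⟨⟨A, B, mul_eq_one_comm.1 hBA, hBA⟩, rfl⟩

theorem isUnit_of_mulVec_injective {A : Matrix n n K} (h : Function.Injective A.mulVec) :
    IsUnit A := by
  obtain ⟨B, hAB⟩ := mulVec_surjective_iff_exists_right_inverse.1
    (LinearMap.injective_iff_surjective (f := mulVecBilin K Kᵐᵒᵖ A).1 h)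
  exact ⟨⟨A, B, hAB, mul_eq_one_comm.1 hAB⟩, rfl⟩

theorem exists_mulVec_eq_zero_of_not_isUnit {A : Matrix n n K} (h : ¬IsUnit A) :
    ∃ v ≠ 0, A *ᵥ v = 0 := by
  contrapose! h
  exact isUnit_of_mulVec_injective <|
    (injective_iff_map_eq_zero (mulVecBilin K Kᵐᵒᵖ A)).2 fun v hv => by_contra fun hv0 => h v hv0 hv

theorem exists_vecMul_eq_zero_of_not_isUnit {A : Matrix n n K} (h : ¬IsUnit A) :
    ∃ v ≠ 0, v ᵥ* A = 0 := by
  contrapose! h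
  exact isUnit_of_vecMul_injective <|
    (injective_iff_map_eq_zero A.vecMulLinear).2 fun v hv => by_contra fun hv0 => h v hv0 hv

theorem exists_mulVec_eq_self_of_not_isUnit {A : Matrix n n K} (h : ¬IsUnit (A - 1)) :
    ∃ v ≠ 0, A *ᵥ v = v := by
  obtain ⟨v, hv, hAv⟩ := exists_mulVec_eq_zero_of_not_isUnit h
  exact ⟨v, hv, by rwa [sub_mulVec, one_mulVec, sub_eq_zero] at hAv⟩

theorem exists_vecMul_eq_self_of_not_isUnit {A : Matrix n n K} (h : ¬IsUnit (A - 1)) :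
    ∃ v ≠ 0, v ᵥ* A = v := by
  obtain ⟨v, hv, hvA⟩ := exists_vecMul_eq_zero_of_not_isUnit h
  exact ⟨v, hv, by rwa [vecMul_sub, vecMul_one, sub_eq_zero] at hvA⟩

end

section
variable {K m : Type*} [DivisionRing K]

theorem exists_op_smul_eq_of_mulVec_eq_zero {A : Matrix m (Fin 2) K} (hA : A ≠ 0)
    {u z : Fin 2 → K} (hu : u ≠ 0) (hAu : A *ᵥ u = 0) (hAz : A *ᵥ z = 0) :
    ∃ c : Kᵐᵒᵖ, c • u = z := by
  refine LinearMap.exists_smul_eq_of_finrank_eq_two (f := mulVecBilin K Kᵐᵒᵖ A)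
    (by simp [Module.finrank_pi_fintype, finrank_mulOpposite_self]) (fun hf => hA ?_) hu hAu hAz
  ext i j
  simpa using congrFun (LinearMap.congr_fun hf (Pi.single j 1)) i

theorem exists_smul_eq_of_vecMul_eq_zero {A : Matrix (Fin 2) m K} (hA : A ≠ 0)
    {w ω : Fin 2 → K} (hw : w ≠ 0) (hwA : w ᵥ* A = 0) (hωA : ω ᵥ* A = 0) :
    ∃ c : K, c • w = ω := by
  refine LinearMap.exists_smul_eq_of_finrank_eq_two (f := A.vecMulLinear) (by simp)
    (fun hf => hA ?_) hw hwA hωA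
  ext i j
  simpa using congrFun (LinearMap.congr_fun hf (Pi.single i 1)) j

end

section
variable {K : Type*} [DivisionRing K]

theorem exists_units_mulVec_single_eq {u : Fin 2 → K} (hu : u ≠ 0) :
    ∃ Q : (Matrix (Fin 2) (Fin 2) K)ˣ, (Q : Matrix (Fin 2) (Fin 2) K) *ᵥ Pi.single 0 1 = u := by
  by_cases hu0 : u 0 = 0
  · have hu1 : u 1 ≠ 0 := fun hu1 => hu (funext fun i => by fin_cases i <;> assumption)
    have h : !![0, 1; u 1, 0] * !![0, (u 1)⁻¹; 1, 0] = 1 := by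
      ext i j : 1; fin_cases i <;> fin_cases j <;> simp [mul_apply, hu1]
    refine ⟨⟨_, _, h, mul_eq_one_comm.1 h⟩, funext fun i => ?_⟩
    fin_cases i <;> simp [hu0]
  · have h : !![u 0, 0; u 1, 1] * !![(u 0)⁻¹, 0; -(u 1 * (u 0)⁻¹), 1] = 1 := by
      ext i j : 1; fin_cases i <;> fin_cases j <;> simp [mul_apply, hu0]
    refine ⟨⟨_, _, h, mul_eq_one_comm.1 h⟩, funext fun i => ?_⟩
    fin_cases i <;> simp

theorem exists_units_single_vecMul_eq {w : Fin 2 → K} (hw : w ≠ 0) :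
    ∃ Q : (Matrix (Fin 2) (Fin 2) K)ˣ, Pi.single 1 1 ᵥ* (Q : Matrix (Fin 2) (Fin 2) K) = w := by
  by_cases hw1 : w 1 = 0
  · have hw0 : w 0 ≠ 0 := fun hw0 => hw (funext fun i => by fin_cases i <;> assumption)
    have h : !![0, 1; w 0, 0] * !![0, (w 0)⁻¹; 1, 0] = 1 := by
      ext i j : 1; fin_cases i <;> fin_cases j <;> simp [mul_apply, hw0]
    refine ⟨⟨_, _, h, mul_eq_one_comm.1 h⟩, funext fun i => ?_⟩
    fin_cases i <;> simp [hw1]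
  · have h : !![1, 0; w 0, w 1] * !![1, 0; -((w 1)⁻¹ * w 0), (w 1)⁻¹] = 1 := by
      ext i j : 1; fin_cases i <;> fin_cases j <;> simp [mul_apply, hw1]
    refine ⟨⟨_, _, h, mul_eq_one_comm.1 h⟩, funext fun i => ?_⟩
    fin_cases i <;> simp

end

section
variable {K : Type*} [DivisionRing K] {A B : Matrix (Fin 2) (Fin 2) K}

theorem mulVec_eq_self_of_ne_one (hA : A ≠ 1) {u z : Fin 2 → K} (hz : z ≠ 0)
    (hAu : A *ᵥ u = u) (hAz : A *ᵥ z = z) (hBz : B *ᵥ z = z) : B *ᵥ u = u := by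
  obtain ⟨c, rfl⟩ := exists_op_smul_eq_of_mulVec_eq_zero (sub_ne_zero.2 hA) hz
    (by rw [sub_mulVec, one_mulVec, hAz, sub_self]) (by rw [sub_mulVec, one_mulVec, hAu, sub_self])
  rw [mulVec_smul, hBz]

theorem vecMul_eq_self_of_ne_one (hA : A ≠ 1) {w ω : Fin 2 → K} (hω : ω ≠ 0)
    (hwA : w ᵥ* A = w) (hωA : ω ᵥ* A = ω) (hωB : ω ᵥ* B = ω) : w ᵥ* B = w := by
  obtain ⟨c, rfl⟩ := exists_smul_eq_of_vecMul_eq_zero (sub_ne_zero.2 hA) hω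
    (by rw [vecMul_sub, vecMul_one, hωA, sub_self]) (by rw [vecMul_sub, vecMul_one, hwA, sub_self])
  rw [smul_vecMul, hωB]

theorem eq_zero_of_dotProduct_eq_zero {u v ρ : Fin 2 → K} (hu : u ≠ 0)
    (hv : ∀ c : Kᵐᵒᵖ, c • u ≠ v) (hρu : ρ ⬝ᵥ u = 0) (hρv : ρ ⬝ᵥ v = 0) : ρ = 0 := by
  by_contra hρ
  have hrow (x : Fin 2 → K) : replicateRow (Fin 1) ρ *ᵥ x = fun _ => ρ ⬝ᵥ x := by
    ext; simp [mulVec, replicateRow]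
  obtain ⟨c, hc⟩ := exists_op_smul_eq_of_mulVec_eq_zero (A := replicateRow (Fin 1) ρ)
    (fun h => hρ (funext fun j => congrFun (congrFun h 0) j))
    hu (by rw [hrow, hρu]; rfl) (by rw [hrow, hρv]; rfl)
  exact hv c hc

theorem exists_common_fixed_of_mul {u v w : Fin 2 → K} (hu : u ≠ 0) (hAu : A *ᵥ u = u)
    (hv : v ≠ 0) (hBv : B *ᵥ v = v) (hABw : w ᵥ* (A * B) = w) :
    (∃ z ≠ 0, A *ᵥ z = z ∧ B *ᵥ z = z) ∨ (w ᵥ* A = w ∧ w ᵥ* B = w) := by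
  by_cases huv : ∃ c : Kᵐᵒᵖ, c • u = v
  · obtain ⟨c, rfl⟩ := huv
    exact .inl ⟨_, hv, by rw [mulVec_smul, hAu], hBv⟩
  push Not at huv
  -- `σ := w A` satisfies `σ B = w`; then `σ - w` kills both `u` and `v`, which span `K²`.
  set σ := w ᵥ* A
  have hσB : σ ᵥ* B = w := by rw [vecMul_vecMul, hABw]
  have hσ : σ - w = 0 := eq_zero_of_dotProduct_eq_zero hu huv
    (by rw [sub_dotProduct, ← dotProduct_mulVec, hAu, sub_self])
    (by rw [sub_dotProduct, ← hσB, ← dotProduct_mulVec σ B, hBv, sub_self])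
  rw [sub_eq_zero] at hσ
  exact .inr ⟨hσ, hσ ▸ hσB⟩

theorem exists_common_fixed_of_not_isUnit (hA : ¬IsUnit (A - 1)) (hB : ¬IsUnit (B - 1))
    (hAB : ¬IsUnit (A * B - 1)) :
    (∃ z ≠ 0, A *ᵥ z = z ∧ B *ᵥ z = z) ∨ (∃ w ≠ 0, w ᵥ* A = w ∧ w ᵥ* B = w) := by
  obtain ⟨u, hu, hAu⟩ := exists_mulVec_eq_self_of_not_isUnit hA
  obtain ⟨v, hv, hBv⟩ := exists_mulVec_eq_self_of_not_isUnit hB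
  obtain ⟨w, hw, hABw⟩ := exists_vecMul_eq_self_of_not_isUnit hAB
  exact (exists_common_fixed_of_mul hu hAu hv hBv hABw).imp id fun h => ⟨w, hw, h⟩

theorem exists_common_fixed_vector_or_covector (S : Set (Matrix (Fin 2) (Fin 2) K))
    (hmul : ∀ A ∈ S, ∀ B ∈ S, A * B ∈ S) (hS : ∀ A ∈ S, ¬IsUnit (A - 1)) :
    (∃ u ≠ 0, ∀ A ∈ S, A *ᵥ u = u) ∨ (∃ w ≠ 0, ∀ A ∈ S, w ᵥ* A = w) := by
  have pair {A} (hA : A ∈ S) {B} (hB : B ∈ S) := exists_common_fixed_of_not_isUnit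
    (hS A hA) (hS B hB) (hS _ (hmul A hA B hB))
  by_cases htriv : ∀ A ∈ S, A = 1
  · exact .inl ⟨Pi.single 0 1, by simp, fun A hA => by rw [htriv A hA, one_mulVec]⟩
  push Not at htriv
  obtain ⟨A₀, hA₀, hA₀1⟩ := htriv
  obtain ⟨u₀, hu₀, hA₀u₀⟩ := exists_mulVec_eq_self_of_not_isUnit (hS A₀ hA₀)
  obtain ⟨w₀, hw₀, hw₀A₀⟩ := exists_vecMul_eq_self_of_not_isUnit (hS A₀ hA₀)
  by_cases hu : ∀ B ∈ S, B *ᵥ u₀ = u₀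
  · exact .inl ⟨u₀, hu₀, hu⟩
  by_cases hw : ∀ C ∈ S, w₀ ᵥ* C = w₀
  · exact .inr ⟨w₀, hw₀, hw⟩
  push Not at hu hw
  obtain ⟨B, hB, hBu₀⟩ := hu
  obtain ⟨C, hC, hw₀C⟩ := hw
  -- Comparing `A₀` with `B` and with `C` pins down what `B` and `C` fix; comparing `B` with `C`
  -- then fails.
  have hw₀B : w₀ ᵥ* B = w₀ := by
    rcases pair hA₀ hB with ⟨z, hz, hA₀z, hBz⟩ | ⟨w, hw, hwA₀, hwB⟩
    · exact absurd (mulVec_eq_self_of_ne_one hA₀1 hz hA₀u₀ hA₀z hBz) hBu₀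
    · exact vecMul_eq_self_of_ne_one hA₀1 hw hw₀A₀ hwA₀ hwB
  have hCu₀ : C *ᵥ u₀ = u₀ := by
    rcases pair hA₀ hC with ⟨z, hz, hA₀z, hCz⟩ | ⟨w, hw, hwA₀, hwC⟩
    · exact mulVec_eq_self_of_ne_one hA₀1 hz hA₀u₀ hA₀z hCz
    · exact absurd (vecMul_eq_self_of_ne_one hA₀1 hw hw₀A₀ hwA₀ hwC) hw₀C
  have hB1 : B ≠ 1 := by rintro rfl; exact hBu₀ (one_mulVec u₀)
  have hC1 : C ≠ 1 := by rintro rfl; exact hw₀C (vecMul_one w₀)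
  rcases pair hB hC with ⟨z, hz, hBz, hCz⟩ | ⟨w, hw, hwB, hwC⟩
  · exact absurd (mulVec_eq_self_of_ne_one hC1 hz hCu₀ hCz hBz) hBu₀
  · exact absurd (vecMul_eq_self_of_ne_one hB1 hw hw₀B hwB hwC) hw₀C

end
end Matrix

def linPart {R : Type*} (M : Matrix (Fin 3) (Fin 3) R) : Matrix (Fin 2) (Fin 2) R :=
  !![M 0 0, M 0 1; M 1 0, M 1 1]

def ofLinPart {R : Type*} [Semiring R] : Matrix (Fin 2) (Fin 2) R →* Matrix (Fin 3) (Fin 3) R where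
  toFun Q := !![Q 0 0, Q 0 1, 0; Q 1 0, Q 1 1, 0; 0, 0, 1]
  map_one' := by ext i j; fin_cases i <;> fin_cases j <;> rfl
  map_mul' Q Q' := by
    ext i j; fin_cases i <;> fin_cases j <;> simp [mul_apply, Fin.sum_univ_succ]

section
variable {R : Type*} [Semiring R]

@[simp]
theorem linPart_ofLinPart (Q : Matrix (Fin 2) (Fin 2) R) : linPart (ofLinPart Q) = Q := by
  ext i j; fin_cases i <;> fin_cases j <;> rfl

theorem linPart_one : linPart (1 : Matrix (Fin 3) (Fin 3) R) = 1 := by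
  rw [← map_one ofLinPart, linPart_ofLinPart]

end

section
variable {M N : Matrix (Fin 3) (Fin 3) ℍ[ℝ]}

theorem IsAffMat.mul (hM : IsAffMat M) (hN : IsAffMat N) : IsAffMat (M * N) := by
  obtain ⟨hM0, hM1, hM2⟩ := hM
  obtain ⟨hN0, hN1, hN2⟩ := hN
  refine ⟨?_, ?_, ?_⟩ <;> simp [mul_apply, Fin.sum_univ_three, hM0, hM1, hM2, hN0, hN1, hN2]

theorem isAffMat_ofLinPart (Q : Matrix (Fin 2) (Fin 2) ℍ[ℝ]) : IsAffMat (ofLinPart Q) :=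
  ⟨rfl, rfl, rfl⟩

theorem linPart_mul (hN : IsAffMat N) : linPart (M * N) = linPart M * linPart N := by
  obtain ⟨hN0, hN1, -⟩ := hN
  ext i j : 1; fin_cases i <;> fin_cases j <;>
    simp [linPart, mul_apply, Fin.sum_univ_succ, hN0, hN1]

theorem isUnit_linPart (hM : IsAffMat M) (hN : IsAffMat N) (hMN : M * N = 1) (hNM : N * M = 1) :
    IsUnit (linPart M) :=
  ⟨⟨linPart M, linPart N, by rw [← linPart_mul hN, hMN, linPart_one],
    by rw [← linPart_mul hM, hNM, linPart_one]⟩, rfl⟩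

theorem affAct_eq_mulVec_add (x : Fin 2 → ℍ[ℝ]) :
    affAct M (x 0, x 1) =
      ((linPart M *ᵥ x + ![M 0 2, M 1 2]) 0, (linPart M *ᵥ x + ![M 0 2, M 1 2]) 1) := by
  simp [affAct, linPart, dotProduct, Fin.sum_univ_two]

theorem exists_affAct_eq_self (h : IsUnit (linPart M - 1)) : ∃ p, affAct M p = p := by
  obtain ⟨U, hU⟩ := h
  set x := -((U⁻¹ : (Matrix (Fin 2) (Fin 2) ℍ[ℝ])ˣ).val *ᵥ ![M 0 2, M 1 2])
  have hx : (linPart M - 1) *ᵥ x = -![M 0 2, M 1 2] := by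
    rw [← hU, mulVec_neg, mulVec_mulVec, Units.mul_inv, one_mulVec]
  rw [sub_mulVec, one_mulVec, sub_eq_iff_eq_add] at hx
  exact ⟨(x 0, x 1), by rw [affAct_eq_mulVec_add, hx, neg_add_cancel_comm]⟩

theorem inG1_of_single_vecMul (hM : IsAffMat M) (hunit : IsUnit (linPart M))
    (h : Pi.single 1 1 ᵥ* linPart M = Pi.single 1 1) : InG1 M := by
  have h10 : M 1 0 = 0 := by simpa [linPart] using congrFun h 0
  have h11 : M 1 1 = 1 := by simpa [linPart] using congrFun h 1
  refine ⟨fun h00 => ?_, h10, h11, hM⟩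
  have : linPart M *ᵥ Pi.single 0 1 = linPart M *ᵥ 0 := by
    ext i : 1; fin_cases i <;> simp [linPart, h00, h10]
  simpa using mulVec_injective_of_isUnit hunit this

theorem inG2_of_mulVec_single (hM : IsAffMat M) (hunit : IsUnit (linPart M))
    (h : linPart M *ᵥ Pi.single 0 1 = Pi.single 0 1) : InG2 M := by
  have h00 : M 0 0 = 1 := by simpa [linPart] using congrFun h 0
  have h10 : M 1 0 = 0 := by simpa [linPart] using congrFun h 1
  refine ⟨h00, h10, fun h11 => ?_, hM⟩
  have : Pi.single 1 1 ᵥ* linPart M = 0 ᵥ* linPart M := by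
    ext j : 1; fin_cases j <;> simp [linPart, h10, h11]
  simpa using vecMul_injective_of_isUnit hunit this

end

section
variable (Q : (Matrix (Fin 2) (Fin 2) ℍ[ℝ])ˣ) {g : (Matrix (Fin 3) (Fin 3) ℍ[ℝ])ˣ}

theorem isAffMat_conj_ofLinPart (hg : IsAffMat g.val) :
    IsAffMat ((Units.map ofLinPart Q)⁻¹ * g * Units.map ofLinPart Q).val := by
  simp only [Units.val_mul, Units.coe_map_inv, Units.coe_map]
  exact ((isAffMat_ofLinPart _).mul hg).mul (isAffMat_ofLinPart _)

theorem linPart_conj_ofLinPart (hg : IsAffMat g.val) :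
    linPart ((Units.map ofLinPart Q)⁻¹ * g * Units.map ofLinPart Q).val =
      Q⁻¹.val * linPart g.val * Q.val := by
  simp only [Units.val_mul, Units.coe_map_inv, Units.coe_map]
  rw [linPart_mul (isAffMat_ofLinPart _), linPart_mul hg, linPart_ofLinPart, linPart_ofLinPart]

theorem isUnit_linPart_conj_ofLinPart (hg : IsAffMat g.val) (hunit : IsUnit (linPart g.val)) :
    IsUnit (linPart ((Units.map ofLinPart Q)⁻¹ * g * Units.map ofLinPart Q).val) := by
  rw [linPart_conj_ofLinPart Q hg]
  exact (Q⁻¹.isUnit.mul hunit).mul Q.isUnit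

theorem inG1_conj_ofLinPart (hg : IsAffMat g.val) (hunit : IsUnit (linPart g.val))
    {w : Fin 2 → ℍ[ℝ]} (hQ : Pi.single 1 1 ᵥ* Q⁻¹.val = w) (hgw : w ᵥ* linPart g.val = w) :
    InG1 ((Units.map ofLinPart Q)⁻¹ * g * Units.map ofLinPart Q).val := by
  refine inG1_of_single_vecMul (isAffMat_conj_ofLinPart Q hg)
    (isUnit_linPart_conj_ofLinPart Q hg hunit) ?_
  rw [linPart_conj_ofLinPart Q hg, ← vecMul_vecMul, ← vecMul_vecMul, hQ, hgw, ← hQ,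
    vecMul_vecMul, Units.inv_mul, vecMul_one]

theorem inG2_conj_ofLinPart (hg : IsAffMat g.val) (hunit : IsUnit (linPart g.val))
    {u : Fin 2 → ℍ[ℝ]} (hQ : Q.val *ᵥ Pi.single 0 1 = u) (hgu : linPart g.val *ᵥ u = u) :
    InG2 ((Units.map ofLinPart Q)⁻¹ * g * Units.map ofLinPart Q).val := by
  refine inG2_of_mulVec_single (isAffMat_conj_ofLinPart Q hg)
    (isUnit_linPart_conj_ofLinPart Q hg hunit) ?_
  rw [linPart_conj_ofLinPart Q hg, ← mulVec_mulVec, ← mulVec_mulVec, hQ, hgu, ← hQ,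
    mulVec_mulVec, Units.inv_mul, one_mulVec]

end

theorem not_isUnit_linPart_sub_one {Γ : Subgroup (Matrix (Fin 3) (Fin 3) ℍ[ℝ])ˣ}
    (hfree : ActsFreely Γ) {g : (Matrix (Fin 3) (Fin 3) ℍ[ℝ])ˣ} (hg : g ∈ Γ) :
    ¬IsUnit (linPart g.val - 1) := by
  intro h
  obtain ⟨p, hp⟩ := exists_affAct_eq_self h
  rw [hfree g hg ⟨p, hp⟩, Units.val_one, linPart_one, sub_self] at h
  exact not_isUnit_zero h

/-- If `Γ ⊆ Aff(2,ℍ)` acts freely on ℍ², then `Γ` is conjugate in Aff(2,ℍ) to a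
subgroup of `G₁` or to a subgroup of `G₂`. -/
theorem conjugate_to_subgroup_of_G1_or_G2
    (Γ : Subgroup (Matrix (Fin 3) (Fin 3) ℍ[ℝ])ˣ)
    (haff : ∀ g ∈ Γ, IsAffMat g.val)
    (hfree : ActsFreely Γ) :
    ∃ P : (Matrix (Fin 3) (Fin 3) ℍ[ℝ])ˣ, IsAffMat P.val ∧
      ((∀ g ∈ Γ, InG1 ((P⁻¹ * g * P).val)) ∨ (∀ g ∈ Γ, InG2 ((P⁻¹ * g * P).val))) := by
  have hunit (g) (hg : g ∈ Γ) : IsUnit (linPart g.val) :=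
    isUnit_linPart (haff g hg) (haff _ (inv_mem hg)) g.mul_inv g.inv_mul
  rcases exists_common_fixed_vector_or_covector {A | ∃ g ∈ Γ, linPart g.val = A}
      (by
        rintro _ ⟨g, hg, rfl⟩ _ ⟨h, hh, rfl⟩
        exact ⟨g * h, mul_mem hg hh, linPart_mul (haff h hh)⟩)
      (by rintro _ ⟨g, hg, rfl⟩; exact not_isUnit_linPart_sub_one hfree hg) with
    ⟨u, hu, hfix⟩ | ⟨w, hw, hfix⟩
  · obtain ⟨Q, hQ⟩ := exists_units_mulVec_single_eq hu
    refine ⟨Units.map ofLinPart Q, by exact isAffMat_ofLinPart _, .inr fun g hg => ?_⟩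
    exact inG2_conj_ofLinPart Q (haff g hg) (hunit g hg) hQ (hfix _ ⟨g, hg, rfl⟩)
  · obtain ⟨R, hR⟩ := exists_units_single_vecMul_eq hw
    refine ⟨Units.map ofLinPart R⁻¹, by exact isAffMat_ofLinPart _, .inl fun g hg => ?_⟩
    exact inG1_conj_ofLinPart _ (haff g hg) (hunit g hg) (by rwa [inv_inv])
      (hfix _ ⟨g, hg, rfl⟩)
end
end

section
/- Let Γ be a subgroup of G₁ acting freely on ℍ². Then h(Γ) = {h(A) : A ∈ Γ} is an abelian group, and there exists an imaginary unit I ∈ ℍ (i.e. I² = −1) such that for every element [[a,b,r],[0,1,s],[0,0,1]] of Γ, the entry a lies in the real plane ℝ + ℝI spanned by 1 and I. -/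
/-!
On `G₁` the entry `s` adds up under multiplication, so every commutator of `Γ` has `s = 0`.
An element with `s = 0` acts as `(x, y) ↦ (a x + b y + r, y)`, which has a fixed point
unless `a = 1` and `b = 0`; freeness therefore gives every commutator trivial holonomy,
and `h(Γ)` is abelian. In particular the entries `a` commute pairwise, and pairwise
commuting quaternions have parallel imaginary parts, hence lie in one plane `ℝ + ℝI`.
-/

open Quaternion Matrix

noncomputable section

/-- The holonomy part of an affine matrix `[[a,b,r],[c,d,s],[0,0,1]]`:
the 2×2 matrix `[[a,b],[c,d]]`. -/
def holonomy (M : Matrix (Fin 3) (Fin 3) ℍ[ℝ]) : Matrix (Fin 2) (Fin 2) ℍ[ℝ] :=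
  Matrix.of fun i j : Fin 2 => M (Fin.castSucc i) (Fin.castSucc j)

theorem MonoidHom.commute_of_ker_le_ker {G H K : Type*} [Group G] [Group H] [CommGroup K]
    (f : G →* H) (g : G →* K) (hker : g.ker ≤ f.ker) (a b : G) : Commute (f a) (f b) := by
  rw [← commutatorElement_eq_one_iff_commute, ← map_commutatorElement]
  refine hker ?_
  rw [MonoidHom.mem_ker, map_commutatorElement, commutatorElement_eq_one_iff_commute]
  exact Commute.all _ _

namespace Quaternion

theorem im_eq_smul_of_commute {a q : ℍ[ℝ]} (hq : q.im ≠ 0) (h : Commute a q) :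
    ∃ t : ℝ, a.im = t • q.im := by
  -- Commuting kills the cross product of the imaginary parts; `t = ⟪a.im, q.im⟫ / ‖q.im‖²`.
  have hI := congrArg (·.imI) h.eq
  have hJ := congrArg (·.imJ) h.eq
  have hK := congrArg (·.imK) h.eq
  simp only [imI_mul, imJ_mul, imK_mul] at hI hJ hK
  have hn : q.imI ^ 2 + q.imJ ^ 2 + q.imK ^ 2 ≠ 0 := by
    simpa [normSq_def'] using normSq_ne_zero.2 hq
  refine ⟨(a.imI * q.imI + a.imJ * q.imJ + a.imK * q.imK) / (q.imI ^ 2 + q.imJ ^ 2 + q.imK ^ 2),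
    ?_⟩
  ext <;> simp only [re_im, imI_im, imJ_im, imK_im, re_smul, imI_smul, imJ_smul, imK_smul,
    smul_eq_mul, mul_zero, div_mul_eq_mul_div] <;> rw [eq_div_iff hn]
  · linear_combination (q.imJ / 2) * hK - (q.imK / 2) * hJ
  · linear_combination (q.imK / 2) * hI - (q.imI / 2) * hK
  · linear_combination (q.imI / 2) * hJ - (q.imJ / 2) * hI

theorem exists_sq_eq_neg_one_and_im_eq_smul {u : ℍ[ℝ]} (hu : u.im ≠ 0) :
    ∃ I : ℍ[ℝ], I ^ 2 = -1 ∧ ∃ c : ℝ, u.im = c • I := by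
  have hpos : 0 < normSq u.im := normSq_nonneg.lt_of_ne' (normSq_ne_zero.2 hu)
  set c := √(normSq u.im)
  have hc : c ≠ 0 := (Real.sqrt_pos.2 hpos).ne'
  refine ⟨c⁻¹ • u.im, ?_, c, by rw [smul_inv_smul₀ hc]⟩
  rw [smul_pow, im_sq, smul_neg, inv_pow, Real.sq_sqrt hpos.le, smul_coe, inv_mul_cancel₀ hpos.ne',
    coe_one]

theorem exists_sq_eq_neg_one_of_pairwise_commute {ι : Type*} (a : ι → ℍ[ℝ])
    (h : ∀ i j, Commute (a i) (a j)) :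
    ∃ I : ℍ[ℝ], I ^ 2 = -1 ∧ ∀ i, ∃ x y : ℝ, a i = (x : ℍ[ℝ]) + (y : ℍ[ℝ]) * I := by
  obtain ⟨u, hu, hpar⟩ : ∃ u : ℍ[ℝ], u.im ≠ 0 ∧ ∀ i, ∃ t : ℝ, (a i).im = t • u.im := by
    by_cases hreal : ∀ j, (a j).im = 0
    · refine ⟨⟨0, 1, 0, 0⟩, fun h0 => one_ne_zero (congrArg (·.imI) h0), fun i => ⟨0, ?_⟩⟩
      rw [hreal i, zero_smul]
    · obtain ⟨j, hj⟩ := not_forall.1 hreal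
      exact ⟨a j, hj, fun i => im_eq_smul_of_commute hj (h i j)⟩
  obtain ⟨I, hI, c, hc⟩ := exists_sq_eq_neg_one_and_im_eq_smul hu
  refine ⟨I, hI, fun i => ?_⟩
  obtain ⟨t, ht⟩ := hpar i
  refine ⟨(a i).re, t * c, ?_⟩
  rw [coe_mul_eq_smul, ← smul_smul, ← hc, ← ht, re_add_im]

end Quaternion

lemma holonomy_mul_of_isAffMat (M : Matrix (Fin 3) (Fin 3) ℍ[ℝ]) {N : Matrix (Fin 3) (Fin 3) ℍ[ℝ]}
    (hN : IsAffMat N) : holonomy (M * N) = holonomy M * holonomy N := by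
  refine Matrix.ext fun i j => ?_
  fin_cases i <;> fin_cases j <;>
    simp [holonomy, Matrix.mul_apply, Fin.sum_univ_three, Fin.sum_univ_two, hN.1, hN.2.1]

lemma holonomy_eq_one_iff {M : Matrix (Fin 3) (Fin 3) ℍ[ℝ]} (h10 : M 1 0 = 0) (h11 : M 1 1 = 1) :
    holonomy M = 1 ↔ M 0 0 = 1 ∧ M 0 1 = 0 := by
  rw [← Matrix.ext_iff]
  simp [Fin.forall_fin_two, holonomy, h10, h11]

lemma holonomy_one : holonomy (1 : Matrix (Fin 3) (Fin 3) ℍ[ℝ]) = 1 :=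
  (holonomy_eq_one_iff (by simp) (by simp)).2 ⟨by simp, by simp⟩

lemma exists_affAct_eq_self_s6 {M : Matrix (Fin 3) (Fin 3) ℍ[ℝ]} (h10 : M 1 0 = 0) (h11 : M 1 1 = 1)
    (h12 : M 1 2 = 0) (hM : M 0 0 ≠ 1 ∨ M 0 1 ≠ 0) : ∃ p, affAct M p = p := by
  have hsnd : ∀ p, (affAct M p).2 = p.2 := fun p => by simp [affAct, h10, h11, h12]
  rcases hM with ha | hb
  · have ha' : M 0 0 - 1 ≠ 0 := sub_ne_zero.2 ha
    refine ⟨(-((M 0 0 - 1)⁻¹ * M 0 2), 0), Prod.ext ?_ (hsnd _)⟩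
    calc M 0 0 * -((M 0 0 - 1)⁻¹ * M 0 2) + M 0 1 * 0 + M 0 2
        = -((M 0 0 - 1)⁻¹ * M 0 2) - ((M 0 0 - 1) * (M 0 0 - 1)⁻¹) * M 0 2 + M 0 2 := by
          noncomm_ring
      _ = -((M 0 0 - 1)⁻¹ * M 0 2) := by rw [mul_inv_cancel₀ ha']; noncomm_ring
  · refine ⟨(0, -((M 0 1)⁻¹ * M 0 2)), Prod.ext ?_ (hsnd _)⟩
    simp [affAct, ← mul_assoc, mul_inv_cancel₀ hb]

section

variable {Γ : Subgroup (Matrix (Fin 3) (Fin 3) ℍ[ℝ])ˣ}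

def holonomyHom (hΓ : ∀ g ∈ Γ, IsAffMat g.val) : Γ →* (Matrix (Fin 2) (Fin 2) ℍ[ℝ])ˣ :=
  MonoidHom.toHomUnits
    { toFun := fun g => holonomy g.1.val
      map_one' := holonomy_one
      map_mul' := fun _ h => holonomy_mul_of_isAffMat _ (hΓ h h.2) }

-- `g ↦ s` for `g = [[a,b,r],[0,1,s],[0,0,1]]`.
def yTranslationHom (hΓ : ∀ g ∈ Γ, InG1 g.val) : Γ →* Multiplicative ℍ[ℝ] where
  toFun g := .ofAdd (g.1.val 1 2)
  map_one' := by simp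
  map_mul' g h := by
    obtain ⟨-, hg10, hg11, -⟩ := hΓ g g.2
    obtain ⟨-, -, -, -, -, hh22⟩ := hΓ h h.2
    simp [← ofAdd_add, Matrix.mul_apply, Fin.sum_univ_three, hg10, hg11, hh22, add_comm]

lemma ker_yTranslationHom_le_ker_holonomyHom (hΓ : ∀ g ∈ Γ, InG1 g.val) (hfree : ActsFreely Γ) :
    (yTranslationHom hΓ).ker ≤ (holonomyHom fun g hg => (hΓ g hg).2.2.2).ker := by
  rintro ⟨g, hg⟩ hs
  obtain ⟨-, h10, h11, -⟩ := hΓ g hg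
  rw [MonoidHom.mem_ker, Units.ext_iff]
  by_contra hne
  change ¬holonomy g.val = 1 at hne
  rw [holonomy_eq_one_iff h10 h11, not_and_or] at hne
  obtain ⟨p, hp⟩ := exists_affAct_eq_self_s6 h10 h11 hs hne
  obtain rfl : g = 1 := hfree g hg ⟨p, hp⟩
  simp at hne

end

lemma commute_zero_zero_of_commute_holonomy {M N : Matrix (Fin 3) (Fin 3) ℍ[ℝ]}
    (h : Commute (holonomy M) (holonomy N)) (hM : M 1 0 = 0) (hN : N 1 0 = 0) :
    Commute (M 0 0) (N 0 0) := by
  simpa [Commute, SemiconjBy, Matrix.mul_apply, Fin.sum_univ_two, holonomy, hM, hN] using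
    congrFun (congrFun h.eq 0) 0

/-- If `Γ ⊆ G₁` acts freely on ℍ², then the holonomy group `h(Γ)` is abelian and there
is an imaginary unit `I` such that the `(0,0)` entry `a` of every element of `Γ` lies
in the plane `ℝ + ℝI`. -/
theorem subgroup_of_G1_abelian_holonomy
    (Γ : Subgroup (Matrix (Fin 3) (Fin 3) ℍ[ℝ])ˣ)
    (hG1 : ∀ g ∈ Γ, InG1 g.val)
    (hfree : ActsFreely Γ) :
    (∀ A ∈ Γ, ∀ B ∈ Γ,
      holonomy A.val * holonomy B.val = holonomy B.val * holonomy A.val) ∧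
    ∃ I : ℍ[ℝ], I ^ 2 = -1 ∧
      ∀ g ∈ Γ, ∃ x y : ℝ, g.val 0 0 = (x : ℍ[ℝ]) + (y : ℍ[ℝ]) * I := by
  have hcomm : ∀ A B : Γ, Commute (holonomy A.1.val) (holonomy B.1.val) := fun A B =>
    ((holonomyHom _).commute_of_ker_le_ker _
      (ker_yTranslationHom_le_ker_holonomyHom hG1 hfree) A B).units_val
  obtain ⟨I, hI, hspan⟩ := Quaternion.exists_sq_eq_neg_one_of_pairwise_commute
    (fun A : Γ => A.1.val 0 0)
    fun A B => commute_zero_zero_of_commute_holonomy (hcomm A B) (hG1 _ A.2).2.1 (hG1 _ B.2).2.1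
  exact ⟨fun A hA B hB => hcomm ⟨A, hA⟩ ⟨B, hB⟩, I, hI, fun g hg => hspan ⟨g, hg⟩⟩
end
end
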